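/- If X is a finite connected n-dimensional CW complex with H^n(X; ℤ) ≠ 0, then there exists a map from X to ℝPⁿ whose entire homotopy class consists of surjective maps (a strong surjection). -/

import Mathlib

/-- The `n`-sphere, as the unit sphere in Euclidean `(n+1)`-space. -/
noncomputable abbrev Sph (n : ℕ) : Type :=
  Metric.sphere (0 : EuclideanSpace ℝ (Fin (n + 1))) 1

/-- The antipodal identification on the `n`-sphere. -/
noncomputable def antipodalSetoid (n : ℕ) : Setoid (Sph n) :=
  ⟨fun a b => a = b ∨ a = -b, by
    refine ⟨fun a => Or.inl rfl, ?_, ?_⟩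
    · rintro a b (rfl | rfl)
      · exact Or.inl rfl
      · exact Or.inr (neg_neg b).symm
    · rintro a b c (rfl | rfl) (h | h)
      · exact Or.inl h
      · exact Or.inr h
      · exact Or.inr (by rw [h])
      · exact Or.inl (by rw [h, neg_neg])⟩

/-- Real projective `n`-space, as the antipodal quotient of the `n`-sphere. -/
noncomputable def RPn (n : ℕ) : Type := Quotient (antipodalSetoid n)

noncomputable instance (n : ℕ) : TopologicalSpace (RPn n) := instTopologicalSpaceQuotient

/-!
A map `X → ℝPⁿ` of the form `p ∘ f`, with `p : Sⁿ → ℝPⁿ` the antipodal double covering and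
`Φ f ≠ 0`, is a strong surjection. By homotopy lifting along `p`, every map homotopic to
`p ∘ f` is `p ∘ h` with `h` homotopic to `f`, so `Φ h = Φ f ≠ 0`. If `p ∘ h` missed a point
`p y`, then `h` would miss `y`, hence never be antipodal to the constant map at `-y`, and
normalizing the straight-line homotopy would make `h` null-homotopic, forcing `Φ h = 0`.
-/

open Metric Topology unitInterval

theorem IsCoveringMap.exists_homotopic_lift {E X A : Type*} [TopologicalSpace E]
    [TopologicalSpace X] [TopologicalSpace A] {p : C(E, X)} (hp : IsCoveringMap p)
    {f : C(A, E)} {g : C(A, X)} (hfg : (p.comp f).Homotopic g) :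
    ∃ h : C(A, E), f.Homotopic h ∧ p.comp h = g := by
  obtain ⟨H⟩ := hfg
  let L := hp.liftHomotopy H.toContinuousMap f H.apply_zero
  refine ⟨⟨fun a => L (1, a), by fun_prop⟩,
    ⟨{ toContinuousMap := L
       map_zero_left := hp.liftHomotopy_zero _ f _
       map_one_left := fun _ => rfl }⟩, ?_⟩
  ext a
  exact (congr_fun (hp.liftHomotopy_lifts H.toContinuousMap f H.apply_zero) (1, a)).trans
    (H.apply_one a)

section UnitSphere

variable {E : Type*} [NormedAddCommGroup E] [NormedSpace ℝ E]

theorem Metric.unitSphere_real_eq_one_or_eq_neg_one (g : sphere (0 : ℝ) 1) : g = 1 ∨ g = -1 := by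
  have hg : (g : ℝ) ∈ ({0 - 1, 0 + 1} : Set ℝ) := Real.sphere_eq_pair 0 zero_le_one ▸ g.2
  rcases hg with hg | hg
  · exact Or.inr (Subtype.ext (by simpa using hg))
  · exact Or.inl (Subtype.ext (by simpa using hg))

theorem neg_one_smul_unitSphere (a : sphere (0 : E) 1) : (-1 : sphere (0 : ℝ) 1) • a = -a :=
  Subtype.ext (neg_one_smul ℝ (a : E))

theorem mem_orbit_unitSphere_iff {a b : sphere (0 : E) 1} :
    a ∈ MulAction.orbit (sphere (0 : ℝ) 1) b ↔ a = b ∨ a = -b := by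
  constructor
  · rintro ⟨g, rfl⟩
    rcases unitSphere_real_eq_one_or_eq_neg_one g with rfl | rfl
    · exact Or.inl (one_smul _ b)
    · exact Or.inr (neg_one_smul_unitSphere b)
  · rintro (rfl | rfl)
    · exact MulAction.mem_orbit_self (M := sphere (0 : ℝ) 1) a
    · exact ⟨-1, neg_one_smul_unitSphere b⟩

theorem dist_neg_self_unitSphere (a : sphere (0 : E) 1) : dist (-a) a = 2 := by
  rw [Subtype.dist_eq, coe_neg_sphere, dist_eq_norm, ← neg_add', norm_neg, ← two_smul ℝ,
    norm_smul, norm_eq_of_mem_sphere]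
  norm_num

/-- The group `sphere (0 : ℝ) 1 = {±1}` acts on the unit sphere by scalar multiplication; a ball
of radius `1` is disjoint from its antipodal image since antipodal points are at distance `2`. -/
theorem isQuotientCoveringMap_of_eq_iff_eq_or_eq_neg {X : Type*} [TopologicalSpace X]
    {p : sphere (0 : E) 1 → X} (hp : IsQuotientMap p)
    (hpa : ∀ a b, p a = p b ↔ a = b ∨ a = -b) :
    IsQuotientCoveringMap p (sphere (0 : ℝ) 1) where
  toIsQuotientMap := hp
  apply_eq_iff_mem_orbit := (hpa _ _).trans mem_orbit_unitSphere_iff.symm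
  disjoint e := by
    refine ⟨ball e 1, ball_mem_nhds e one_pos, fun g ⟨_, ⟨a, ha, rfl⟩, hga⟩ => ?_⟩
    rcases unitSphere_real_eq_one_or_eq_neg_one g with rfl | rfl
    · rfl
    · dsimp only at hga
      rw [neg_one_smul_unitSphere, mem_ball] at hga
      rw [mem_ball] at ha
      have := dist_triangle_right (-a) a e
      linarith [dist_neg_self_unitSphere a]

theorem one_sub_smul_add_smul_ne_zero_of_ne_neg {a b : sphere (0 : E) 1} (hab : a ≠ -b) (t : ℝ) :
    (1 - t) • (a : E) + t • (b : E) ≠ 0 := by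
  intro h
  have hnorm : |1 - t| = |t| := by
    simpa [norm_smul, norm_eq_of_mem_sphere] using congr_arg norm (eq_neg_of_add_eq_zero_left h)
  have ht : t = 1 / 2 := by
    rcases abs_eq_abs.mp hnorm with h' | h' <;> linarith
  subst ht
  apply hab
  ext1
  rw [coe_neg_sphere]
  norm_num at h
  rw [← smul_add, smul_eq_zero] at h
  exact eq_neg_of_add_eq_zero_left (h.resolve_left (by norm_num))

theorem ContinuousMap.homotopic_of_ne_neg {X : Type*} [TopologicalSpace X]
    {f g : C(X, sphere (0 : E) 1)} (hfg : ∀ x, f x ≠ -g x) : f.Homotopic g := by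
  let v : I × X → E := fun z => (1 - (z.1 : ℝ)) • (f z.2 : E) + (z.1 : ℝ) • (g z.2 : E)
  have hv : ∀ z, v z ≠ 0 := fun z => one_sub_smul_add_smul_ne_zero_of_ne_neg (hfg z.2) z.1
  have hv_cont : Continuous v := by fun_prop
  exact ⟨{
    toFun z := ⟨‖v z‖⁻¹ • v z, mem_sphere_zero_iff_norm.2 (norm_smul_inv_norm (hv z))⟩
    continuous_toFun :=
      ((hv_cont.norm.inv₀ fun z => norm_ne_zero_iff.2 (hv z)).smul hv_cont).subtype_mk _
    map_zero_left x := Subtype.ext (by simp [v])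
    map_one_left x := Subtype.ext (by simp [v]) }⟩

end UnitSphere

noncomputable def RPn.proj (n : ℕ) : C(Sph n, RPn n) := ⟨Quotient.mk _, continuous_quot_mk⟩

theorem RPn.isQuotientCoveringMap_proj (n : ℕ) :
    IsQuotientCoveringMap (RPn.proj n) (sphere (0 : ℝ) 1) :=
  isQuotientCoveringMap_of_eq_iff_eq_or_eq_neg isQuotientMap_quotient_mk' fun _ _ => Quotient.eq

theorem strong_surjection_onto_RPn_general (n : ℕ) (X : Type) [TopologicalSpace X]
    (Hn : Type) [AddCommGroup Hn] [Nontrivial Hn]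
    (Φ : C(X, Sph n) → Hn)
    (hinv : ∀ f g : C(X, Sph n), f.Homotopic g → Φ f = Φ g)
    (hsurj : Function.Surjective Φ)
    (hconst : ∀ y : Sph n, Φ (ContinuousMap.const X y) = 0) :
    ∃ f : C(X, RPn n), ∀ g : C(X, RPn n), f.Homotopic g → Function.Surjective g := by
  obtain ⟨c, hc⟩ := exists_ne (0 : Hn)
  obtain ⟨f, rfl⟩ := hsurj c
  have hcov := RPn.isQuotientCoveringMap_proj n
  refine ⟨(RPn.proj n).comp f, fun g hfg => ?_⟩
  obtain ⟨h, hfh, rfl⟩ := hcov.isCoveringMap.exists_homotopic_lift hfg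
  intro q
  obtain ⟨y, rfl⟩ := hcov.surjective q
  by_contra hmiss
  have h_null : h.Homotopic (ContinuousMap.const X (-y)) :=
    ContinuousMap.homotopic_of_ne_neg fun x hx => hmiss ⟨x, by simp [hx]⟩
  exact hc (by rw [hinv f h hfh, hinv h _ h_null, hconst])

/-- let `X` be a finite connected `n`-dimensional CW complex with
`Hⁿ(X; ℤ) ≠ 0`; then there is a map `X → ℝPⁿ` whose entire homotopy class consists of
surjective maps (a strong surjection).  The complex `X` is formalized as a compact
connected space together with Hopf–Whitney data: an abelian group `Hn` (playing the role
of `Hⁿ(X; ℤ)`) and an invariant `Φ` inducing a bijection between homotopy classes of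
maps `X → Sⁿ` and `Hn`, sending constant maps to `0`; the hypothesis `Hⁿ(X; ℤ) ≠ 0` is
`Nontrivial Hn`. -/
theorem strong_surjection_onto_RPn (n : ℕ) (X : Type) [TopologicalSpace X]
    [ConnectedSpace X] [CompactSpace X]
    (Hn : Type) [AddCommGroup Hn] [Nontrivial Hn]
    (Φ : C(X, Sph n) → Hn)
    (hinv : ∀ f g : C(X, Sph n), f.Homotopic g → Φ f = Φ g)
    (hclass : ∀ f g : C(X, Sph n), Φ f = Φ g → f.Homotopic g)
    (hsurj : Function.Surjective Φ)
    (hconst : ∀ y : Sph n, Φ (ContinuousMap.const X y) = 0) :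
    ∃ f : C(X, RPn n), ∀ g : C(X, RPn n), f.Homotopic g → Function.Surjective g :=
  strong_surjection_onto_RPn_general n X Hn Φ hinv hsurj hconst
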